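/- arXiv:1104.4669 — 7 statements merged into one kernel-verified Lean document; each statement's English description precedes it below -/
import Mathlib

section
/- The greedy spanner algorithm, which starts from a spanning tree T of G and considers the remaining edges in non-decreasing order of weight, adding an edge e whenever (1+ε)·w(e) is strictly less than the current distance between its endpoints in the partially built subgraph, produces a (1+ε)-spanner of G. -/
open scoped Classical
noncomputable section

/-- Weighted length of a walk: sum of edge weights with multiplicity. -/
def wlen {V : Type*} (w : Sym2 V → ℝ) {G : SimpleGraph V} {u v : V}
    (p : G.Walk u v) : ℝ :=
  (p.edges.map w).sum

/-- Weighted shortest-path distance: infimum of weighted lengths of walks. -/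
def wdist {V : Type*} (G : SimpleGraph V) (w : Sym2 V → ℝ) (u v : V) : ℝ :=
  sInf {x : ℝ | ∃ p : G.Walk u v, wlen w p = x}

/-- `T` is a spanning tree of `G`. -/
def IsSpanningTree {V : Type*} (G T : SimpleGraph V) : Prop :=
  T ≤ G ∧ T.IsTree

/-- One step of the greedy spanner algorithm: add the edge `{p.1, p.2}` iff
`(1+ε)·w(e)` is strictly less than the current distance between its endpoints. -/
def greedyStep {V : Type*} (ε : ℝ) (w : Sym2 V → ℝ)
    (G' : SimpleGraph V) (p : V × V) : SimpleGraph V :=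
  if (1 + ε) * w s(p.1, p.2) < wdist G' w p.1 p.2 then
    G' ⊔ SimpleGraph.fromEdgeSet {s(p.1, p.2)}
  else G'

/-- The greedy spanner algorithm: start from `T` and process the listed edges in
order, adding each edge iff it is not yet `(1+ε)`-approximated. -/
def greedy {V : Type*} (ε : ℝ) (w : Sym2 V → ℝ)
    (T : SimpleGraph V) (l : List (V × V)) : SimpleGraph V :=
  l.foldl (greedyStep ε w) T

/-- `l` lists exactly the edges of `G` not in `T` (each once, in some orientation),
in non-decreasing order of weight. -/
def IsGreedyInput {V : Type*} (G T : SimpleGraph V) (w : Sym2 V → ℝ)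
    (l : List (V × V)) : Prop :=
  (l.map fun p => w s(p.1, p.2)).Pairwise (· ≤ ·) ∧
  (l.map fun p => s(p.1, p.2)).Nodup ∧
  (∀ p ∈ l, G.Adj p.1 p.2 ∧ ¬ T.Adj p.1 p.2) ∧
  (∀ u v : V, G.Adj u v → ¬ T.Adj u v → s(u, v) ∈ l.map fun p => s(p.1, p.2))

/-!
Every edge of `G` ends up `(1+ε)`-approximated in the greedy graph: edges of `T` are present,
and any other edge is, when processed, either added or already approximated; adding edges only
shrinks distances, so that bound survives to the end. A stretch bound on single edges extends
to all walks by the triangle inequality, hence to all distances.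
-/

namespace SimpleGraph

variable {V : Type*} {G H : SimpleGraph V} {w : Sym2 V → ℝ} {u v a b c : V}

lemma wlen_nonneg (hw : ∀ e, 0 ≤ w e) (p : G.Walk u v) : 0 ≤ wlen w p :=
  List.sum_nonneg fun _ hx => by
    obtain ⟨e, -, rfl⟩ := List.mem_map.mp hx
    exact hw e

lemma wdist_le_wlen (hw : ∀ e, 0 ≤ w e) (p : G.Walk u v) : wdist G w u v ≤ wlen w p :=
  csInf_le ⟨0, fun _ ⟨q, hq⟩ => hq ▸ wlen_nonneg hw q⟩ ⟨p, rfl⟩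

lemma le_wdist {x : ℝ} (hr : G.Reachable u v) (h : ∀ p : G.Walk u v, x ≤ wlen w p) :
    x ≤ wdist G w u v := by
  obtain ⟨p⟩ := hr
  exact le_csInf ⟨wlen w p, p, rfl⟩ fun _ ⟨q, hq⟩ => hq ▸ h q

lemma wdist_le_wdist_of_le (hw : ∀ e, 0 ≤ w e) (hle : G ≤ H) (hr : G.Reachable u v) :
    wdist H w u v ≤ wdist G w u v :=
  le_wdist hr fun p => by
    simpa [wlen, Walk.edges_mapLe_eq_edges] using wdist_le_wlen hw (p.mapLe hle)

lemma wdist_le_of_adj (hw : ∀ e, 0 ≤ w e) (h : G.Adj u v) : wdist G w u v ≤ w s(u, v) := by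
  simpa [wlen] using wdist_le_wlen hw (Walk.cons h Walk.nil)

lemma wdist_triangle (hw : ∀ e, 0 ≤ w e) (hab : G.Reachable a b) (hbc : G.Reachable b c) :
    wdist G w a c ≤ wdist G w a b + wdist G w b c := by
  suffices wdist G w a c - wdist G w b c ≤ wdist G w a b by linarith
  refine le_wdist hab fun p => ?_
  suffices wdist G w a c - wlen w p ≤ wdist G w b c by linarith
  refine le_wdist hbc fun q => ?_
  have := wdist_le_wlen hw (p.append q)
  simp only [wlen, Walk.edges_append, List.map_append, List.sum_append] at this ⊢
  linarith

lemma wdist_comm : wdist G w u v = wdist G w v u := by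
  unfold wdist
  congr 1
  ext x
  constructor <;> rintro ⟨p, rfl⟩ <;> exact ⟨p.reverse, by simp [wlen, List.sum_reverse]⟩

lemma wdist_congr_sym2 {a' b' : V} (h : s(a, b) = s(a', b')) :
    wdist G w a b = wdist G w a' b' := by
  rcases Sym2.eq_iff.mp h with ⟨rfl, rfl⟩ | ⟨rfl, rfl⟩
  · rfl
  · exact wdist_comm

lemma wdist_le_mul_wdist_of_forall_adj {c : ℝ} (hw : ∀ e, 0 ≤ w e) (hc : 0 < c)
    (hH : H.Preconnected) (hr : G.Reachable u v)
    (hedge : ∀ a b, G.Adj a b → wdist H w a b ≤ c * w s(a, b)) :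
    wdist H w u v ≤ c * wdist G w u v := by
  have hwalk : ∀ {x y : V} (p : G.Walk x y), wdist H w x y ≤ c * wlen w p := by
    intro x y p
    induction p with
    | nil => simpa [wlen] using wdist_le_wlen hw (Walk.nil : H.Walk _ _)
    | @cons x y z hxy q ih =>
      calc wdist H w x z ≤ wdist H w x y + wdist H w y z := wdist_triangle hw (hH x y) (hH y z)
        _ ≤ c * w s(x, y) + c * wlen w q := add_le_add (hedge x y hxy) ih
        _ = c * wlen w (Walk.cons hxy q) := by simp [wlen, mul_add]
  rw [← div_le_iff₀' hc]
  exact le_wdist hr fun p => (div_le_iff₀' hc).mpr (hwalk p)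

end SimpleGraph

open SimpleGraph

section Greedy

variable {V : Type*} {G H : SimpleGraph V} {w : Sym2 V → ℝ} {ε : ℝ}

lemma le_greedyStep (H : SimpleGraph V) (p : V × V) : H ≤ greedyStep ε w H p := by
  unfold greedyStep
  split
  · exact le_sup_left
  · exact le_rfl

lemma greedyStep_le {p : V × V} (hH : H ≤ G) (hp : G.Adj p.1 p.2) : greedyStep ε w H p ≤ G := by
  unfold greedyStep
  split
  · refine sup_le hH fun x y hxy => ?_
    obtain ⟨he, -⟩ := (fromEdgeSet_adj _).mp hxy
    rcases Sym2.eq_iff.mp (Set.mem_singleton_iff.mp he) with ⟨rfl, rfl⟩ | ⟨rfl, rfl⟩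
    · exact hp
    · exact hp.symm
  · exact hH

lemma le_greedy (H : SimpleGraph V) (l : List (V × V)) : H ≤ greedy ε w H l := by
  induction l generalizing H with
  | nil => exact le_rfl
  | cons q l ih => exact (le_greedyStep H q).trans (ih _)

lemma greedy_le {l : List (V × V)} (hH : H ≤ G) (hl : ∀ p ∈ l, G.Adj p.1 p.2) :
    greedy ε w H l ≤ G := by
  induction l generalizing H with
  | nil => exact hH
  | cons q l ih =>
    exact ih (greedyStep_le hH (hl q List.mem_cons_self)) fun p hp => hl p (List.mem_cons_of_mem _ hp)

lemma wdist_greedyStep_le (hw : ∀ e, 0 ≤ w e) (hε : 0 ≤ ε) {p : V × V} (hne : p.1 ≠ p.2) :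
    wdist (greedyStep ε w H p) w p.1 p.2 ≤ (1 + ε) * w s(p.1, p.2) := by
  unfold greedyStep
  split_ifs with hadd
  · have hadj : (H ⊔ fromEdgeSet {s(p.1, p.2)}).Adj p.1 p.2 :=
      Or.inr ((fromEdgeSet_adj _).mpr ⟨rfl, hne⟩)
    calc _ ≤ w s(p.1, p.2) := wdist_le_of_adj hw hadj
      _ ≤ (1 + ε) * w s(p.1, p.2) := le_mul_of_one_le_left (hw _) (by linarith)
  · exact not_lt.mp hadd

lemma wdist_greedy_le_of_mem (hw : ∀ e, 0 ≤ w e) (hε : 0 ≤ ε) {l : List (V × V)}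
    (hH : H.Preconnected) (hne : ∀ p ∈ l, p.1 ≠ p.2) {p : V × V} (hp : p ∈ l) :
    wdist (greedy ε w H l) w p.1 p.2 ≤ (1 + ε) * w s(p.1, p.2) := by
  induction l generalizing H with
  | nil => simp at hp
  | cons q l ih =>
    have hH' : (greedyStep ε w H q).Preconnected := hH.mono (le_greedyStep H q)
    rcases List.mem_cons.mp hp with rfl | hp
    · exact (wdist_le_wdist_of_le hw (le_greedy _ l) (hH' _ _)).trans
        (wdist_greedyStep_le hw hε (hne p List.mem_cons_self))
    · exact ih hH' (fun r hr => hne r (List.mem_cons_of_mem _ hr)) hp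

lemma wdist_greedy_le_of_adj {T : SimpleGraph V} {l : List (V × V)} {a b : V}
    (hw : ∀ e, 0 ≤ w e) (hε : 0 ≤ ε) (hT : T.Preconnected) (hl : IsGreedyInput G T w l)
    (hab : G.Adj a b) :
    wdist (greedy ε w T l) w a b ≤ (1 + ε) * w s(a, b) := by
  obtain ⟨-, -, hladj, hlcov⟩ := hl
  by_cases hTab : T.Adj a b
  · calc _ ≤ w s(a, b) := wdist_le_of_adj hw (le_greedy T l hTab)
      _ ≤ (1 + ε) * w s(a, b) := le_mul_of_one_le_left (hw _) (by linarith)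
  · obtain ⟨p, hp, hpab⟩ := List.mem_map.mp (hlcov a b hab hTab)
    rw [← hpab, ← wdist_congr_sym2 hpab]
    exact wdist_greedy_le_of_mem hw hε hT (fun q hq => (hladj q hq).1.ne) hp

end Greedy

theorem stmt2_general {V : Type*}
    (G T : SimpleGraph V) (w : Sym2 V → ℝ) (ε : ℝ) (l : List (V × V))
    (hT : IsSpanningTree G T)
    (hw : ∀ e, 0 ≤ w e) (hε : 0 < ε)
    (hl : IsGreedyInput G T w l) :
    greedy ε w T l ≤ G ∧
      ∀ u v : V, wdist (greedy ε w T l) w u v ≤ (1 + ε) * wdist G w u v := by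
  obtain ⟨hTG, hTtree⟩ := hT
  have hTc : T.Preconnected := hTtree.connected.preconnected
  refine ⟨greedy_le hTG fun p hp => (hl.2.2.1 p hp).1, fun u v => ?_⟩
  exact wdist_le_mul_wdist_of_forall_adj hw (by linarith) (hTc.mono (le_greedy T l))
    (hTc.mono hTG u v) fun a b hab => wdist_greedy_le_of_adj hw hε.le hTc hl hab

/-- the greedy spanner algorithm produces a `(1+ε)`-spanner of `G`. -/
theorem stmt2 {V : Type*} [Fintype V]
    (G T : SimpleGraph V) (w : Sym2 V → ℝ) (ε : ℝ) (l : List (V × V))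
    (hconn : G.Connected) (hT : IsSpanningTree G T)
    (hw : ∀ e, 0 ≤ w e) (hε : 0 < ε)
    (hl : IsGreedyInput G T w l) :
    greedy ε w T l ≤ G ∧
      ∀ u v : V, wdist (greedy ε w T l) w u v ≤ (1 + ε) * wdist G w u v :=
  stmt2_general G T w ε l hT hw hε hl
end
end

section
/- In the graph G' output by the greedy spanner algorithm, every edge e of G' not in T and every path P in G' such that e+P forms a simple cycle satisfy (1+ε)·w(e) < w(P). -/
open scoped Classical
noncomputable section

/-!
Induction along the run of the algorithm, with the invariant that in the current graph every
closed trail `e + P` through a non-tree edge `e` has `(1+ε)·w(e) < w(P)`. When an edge `f` is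
added, a closed trail through `f` either has `e = f`, and then `P` is a walk of the old graph, so
`(1+ε)·w(f) < dist ≤ w(P)`; or `f` lies on `P`, and replacing `f` by `e` gives a walk of the old
graph between the ends of `f`, so `(1+ε)·w(f) < w(P) - w(f) + w(e)`. Since edges arrive in
non-decreasing order, `w(e) ≤ w(f)`, whence `(1+ε)·w(e) < w(P)`.
-/

theorem SimpleGraph.Walk.exists_eq_append_cons_of_mem_edges {V : Type*} {G : SimpleGraph V}
    {u v : V} {e : Sym2 V} (p : G.Walk u v) (he : e ∈ p.edges) :
    ∃ (c d : V) (h : G.Adj c d) (p₁ : G.Walk u c) (p₂ : G.Walk d v),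
      p = p₁.append (.cons h p₂) ∧ s(c, d) = e := by
  induction p with
  | nil => simp at he
  | @cons a b _ h q ih =>
    rcases List.mem_cons.1 he with rfl | he
    · exact ⟨a, b, h, .nil, q, rfl, rfl⟩
    · obtain ⟨c, d, hcd, p₁, p₂, rfl, hf⟩ := ih he
      exact ⟨c, d, hcd, .cons h p₁, p₂, rfl, hf⟩

theorem SimpleGraph.Walk.IsTrail.transfer {V : Type*} {G H : SimpleGraph V} {u v : V}
    {p : G.Walk u v} (hp : p.IsTrail) (hpH : ∀ e ∈ p.edges, e ∈ H.edgeSet) :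
    (p.transfer H hpH).IsTrail :=
  ⟨by simpa [edges_transfer] using hp.edges_nodup⟩

namespace GreedySpanner

open SimpleGraph Walk

variable {V : Type*} {G H T : SimpleGraph V} {w : Sym2 V → ℝ} {ε : ℝ} {a b u v x y : V}

@[simp] lemma wlen_cons (h : G.Adj u v) (p : G.Walk v x) :
    wlen w (cons h p) = w s(u, v) + wlen w p := by
  simp [wlen]

@[simp] lemma wlen_append (p : G.Walk u v) (q : G.Walk v x) :
    wlen w (p.append q) = wlen w p + wlen w q := by
  simp [wlen]

@[simp] lemma wlen_reverse (p : G.Walk u v) : wlen w p.reverse = wlen w p := by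
  simp [wlen, List.sum_reverse]

@[simp] lemma wlen_transfer (p : G.Walk u v) (hp : ∀ e ∈ p.edges, e ∈ H.edgeSet) :
    wlen w (p.transfer H hp) = wlen w p := by
  simp [wlen]

lemma wlen_nonneg (hw : ∀ e, 0 ≤ w e) (p : G.Walk u v) : 0 ≤ wlen w p :=
  List.sum_nonneg (by simpa using fun e _ => hw e)

lemma wdist_le_wlen (hw : ∀ e, 0 ≤ w e) (p : G.Walk x y) (h : s(x, y) = s(a, b)) :
    wdist G w a b ≤ wlen w p := by
  have hbdd : BddBelow {r : ℝ | ∃ q : G.Walk a b, wlen w q = r} :=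
    ⟨0, by rintro r ⟨q, rfl⟩; exact wlen_nonneg hw q⟩
  rcases Sym2.eq_iff.1 h with ⟨rfl, rfl⟩ | ⟨rfl, rfl⟩
  · exact csInf_le hbdd ⟨p, rfl⟩
  · exact csInf_le hbdd ⟨p.reverse, wlen_reverse p⟩

lemma mem_edgeSet_of_mem_edgeSet_sup_singleton {e f : Sym2 V}
    (he : e ∈ (H ⊔ fromEdgeSet {f}).edgeSet) (hef : e ≠ f) : e ∈ H.edgeSet := by
  simp_all [edgeSet_sup, edgeSet_fromEdgeSet]

lemma edgeSet_greedyStep_subset (H : SimpleGraph V) (q : V × V) :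
    (greedyStep ε w H q).edgeSet ⊆ insert s(q.1, q.2) H.edgeSet := by
  intro e he
  unfold greedyStep at he
  split_ifs at he
  · by_cases hq : e = s(q.1, q.2)
    · exact .inl hq
    · exact .inr (mem_edgeSet_of_mem_edgeSet_sup_singleton he hq)
  · exact .inr he

def HasLongDetours (ε : ℝ) (w : Sym2 V → ℝ) (T H : SimpleGraph V) : Prop :=
  ∀ ⦃u v : V⦄, H.Adj u v → ¬ T.Adj u v →
    ∀ p : H.Walk v u, p.IsTrail → s(u, v) ∉ p.edges → (1 + ε) * w s(u, v) < wlen w p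

lemma HasLongDetours.sup_edge (hH : HasLongDetours ε w T H) (hw : ∀ e, 0 ≤ w e)
    (hε : 0 ≤ 1 + ε) (hwt : ∀ e ∈ H.edgeSet, e ∉ T.edgeSet → w e ≤ w s(a, b))
    (hab : (1 + ε) * w s(a, b) < wdist H w a b) :
    HasLongDetours ε w T (H ⊔ fromEdgeSet {s(a, b)}) := by
  intro u v huv hTuv p hp huvp
  have toH : ∀ {x y} (q : (H ⊔ fromEdgeSet {s(a, b)}).Walk x y), s(a, b) ∉ q.edges →
      ∀ e ∈ q.edges, e ∈ H.edgeSet := fun q hq e he =>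
    mem_edgeSet_of_mem_edgeSet_sup_singleton (q.edges_subset_edgeSet he)
      (ne_of_mem_of_not_mem he hq)
  by_cases hf : s(a, b) = s(u, v)
  · have hdist := wdist_le_wlen hw (p.transfer H (toH p (by rwa [← hf] at huvp)))
      (hf.trans Sym2.eq_swap).symm
    simpa [hf] using hab.trans_le hdist
  have huvH : H.Adj u v := mem_edgeSet_of_mem_edgeSet_sup_singleton huv (Ne.symm hf)
  by_cases hfp : s(a, b) ∈ p.edges
  · obtain ⟨c, d, hcd, p₁, p₂, rfl, hcdf⟩ := p.exists_eq_append_cons_of_mem_edges hfp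
    have hnodup := hp.edges_nodup
    simp only [edges_append, edges_cons, List.nodup_append, List.nodup_cons] at hnodup
    set q := p₂.append (cons huv p₁)
    have hq : s(c, d) ∉ q.edges := by
      simp only [q, edges_append, edges_cons, List.mem_append, List.mem_cons, not_or]
      exact ⟨hnodup.2.1.1, hcdf ▸ hf, fun h => hnodup.2.2 _ h _ List.mem_cons_self rfl⟩
    rw [hcdf] at hq
    have hdist := wdist_le_wlen hw (q.transfer H (toH q hq)) (Sym2.eq_swap.trans hcdf)
    have hwe := hwt s(u, v) huvH hTuv
    simp only [wlen_append, wlen_cons, hcdf]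
    calc (1 + ε) * w s(u, v) ≤ (1 + ε) * w s(a, b) := mul_le_mul_of_nonneg_left hwe hε
      _ < wlen w p₂ + (w s(u, v) + wlen w p₁) := by
        simpa only [q, wlen_transfer, wlen_append, wlen_cons] using hab.trans_le hdist
      _ ≤ wlen w p₁ + (w s(a, b) + wlen w p₂) := by linarith
  · simpa using hH huvH hTuv (p.transfer H (toH p hfp)) (hp.transfer _) (by simpa using huvp)

lemma hasLongDetours_greedy (hw : ∀ e, 0 ≤ w e) (hε : 0 ≤ 1 + ε) {l : List (V × V)}
    (hsort : (l.map fun p => w s(p.1, p.2)).Pairwise (· ≤ ·)) (hH : HasLongDetours ε w T H)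
    (hwt : ∀ e ∈ H.edgeSet, e ∉ T.edgeSet → ∀ q ∈ l, w e ≤ w s(q.1, q.2)) :
    HasLongDetours ε w T (greedy ε w H l) := by
  induction l generalizing H with
  | nil => exact hH
  | cons q l ih =>
    rw [List.map_cons, List.pairwise_cons] at hsort
    refine ih (H := greedyStep ε w H q) hsort.2 ?_ ?_
    · unfold greedyStep
      split_ifs with hq
      · exact hH.sup_edge hw hε (fun e he heT => hwt e he heT q List.mem_cons_self) hq
      · exact hH
    · intro e he heT q' hq'
      rcases edgeSet_greedyStep_subset H q he with rfl | he
      · exact hsort.1 _ (List.mem_map_of_mem hq')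
      · exact hwt e he heT q' (List.mem_cons_of_mem _ hq')

end GreedySpanner

open GreedySpanner in
theorem stmt3_general {V : Type*}
    (G T : SimpleGraph V) (w : Sym2 V → ℝ) (ε : ℝ) (l : List (V × V))
    (hw : ∀ e, 0 ≤ w e) (hε : 0 < ε)
    (hl : IsGreedyInput G T w l) :
    ∀ (u v : V) (hadj : (greedy ε w T l).Adj u v), ¬ T.Adj u v →
      ∀ p : (greedy ε w T l).Walk v u,
        (SimpleGraph.Walk.cons hadj p).IsCycle →
        (1 + ε) * w s(u, v) < wlen w p := by
  intro u v hadj hTuv p hcyc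
  have hG' : HasLongDetours ε w T (greedy ε w T l) :=
    hasLongDetours_greedy hw (by linarith) hl.1 (fun _ _ h hT => (hT h).elim)
      (fun _ he heT => (heT he).elim)
  obtain ⟨hp, huvp⟩ := (SimpleGraph.Walk.isTrail_cons hadj p).1 hcyc.isTrail
  exact hG' hadj hTuv p hp huvp

/-- in the greedy spanner output `G'`, every non-tree edge `e = {u,v}`
of `G'` and every path `P` in `G'` forming a simple cycle with `e` satisfy
`(1+ε)·w(e) < w(P)`. -/
theorem stmt3 {V : Type*} [Fintype V]
    (G T : SimpleGraph V) (w : Sym2 V → ℝ) (ε : ℝ) (l : List (V × V))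
    (hconn : G.Connected) (hT : IsSpanningTree G T)
    (hw : ∀ e, 0 ≤ w e) (hε : 0 < ε)
    (hl : IsGreedyInput G T w l) :
    ∀ (u v : V) (hadj : (greedy ε w T l).Adj u v), ¬ T.Adj u v →
      ∀ p : (greedy ε w T l).Walk v u,
        (SimpleGraph.Walk.cons hadj p).IsCycle →
        (1 + ε) * w s(u, v) < wlen w p :=
  stmt3_general G T w ε l hw hε hl
end
end

section
/- Suppose G is a graph with spanning tree T admitting a charging scheme of value v: a nonnegative assignment x_{(e,P)} to detours (e a G-edge, P a path with e+P a simple cycle) such that every edge e not in T has total outgoing charge out(e) ≥ 1 and net charge in(e) − out(e) ≤ 0, and every edge of T has net charge at most v, where in(e) = Σ over detours (f,P) with e ∈ P of x_{(f,P)}. If additionally every edge e of a subgraph G' ⊇ T of G with detour path P inside G' satisfies (1+ε)·w(e) < w(P) whenever x_{(e,P)} > 0 restricted to G', then w(G') ≤ (1 + v/ε)·w(T). -/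
open scoped Classical
noncomputable section

/-- Total weight of a graph: sum of weights over its edge set. -/
def totalWeight {V : Type*} (G : SimpleGraph V) (w : Sym2 V → ℝ) : ℝ :=
  ∑ᶠ e ∈ G.edgeSet, w e

/-- A detour in `G`: an edge `{u,v}` together with a path `P` from `v` to `u`
such that `e + P` is a simple cycle. -/
structure Detour {V : Type*} (G : SimpleGraph V) where
  u : V
  v : V
  adj : G.Adj u v
  path : G.Walk v u
  cyc : (SimpleGraph.Walk.cons adj path).IsCycle

/-- The edge of a detour. -/
def Detour.edge {V : Type*} {G : SimpleGraph V} (d : Detour G) : Sym2 V :=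
  s(d.u, d.v)

/-- Total charge going out of edge `e`. -/
def chargeOut {V : Type*} {G : SimpleGraph V} (x : Detour G → ℝ) (e : Sym2 V) : ℝ :=
  ∑ᶠ d ∈ {d : Detour G | d.edge = e}, x d

/-- Total charge coming into edge `e` (as part of detour paths). -/
def chargeIn {V : Type*} {G : SimpleGraph V} (x : Detour G → ℝ) (e : Sym2 V) : ℝ :=
  ∑ᶠ d ∈ {d : Detour G | e ∈ d.path.edges}, x d

/-- A charging scheme from `G` to `T` of value `v`. -/
def IsChargingScheme {V : Type*} (G T : SimpleGraph V) (v : ℝ)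
    (x : Detour G → ℝ) : Prop :=
  (∀ d, 0 ≤ x d) ∧
  (x.support.Finite) ∧
  (∀ e ∈ G.edgeSet, e ∉ T.edgeSet → 1 ≤ chargeOut x e) ∧
  (∀ e ∈ G.edgeSet, e ∉ T.edgeSet → chargeIn x e - chargeOut x e ≤ 0) ∧
  (∀ e ∈ T.edgeSet, chargeIn x e - chargeOut x e ≤ v)

/-- An acyclic charging scheme: additionally only non-tree edges charge, and
there is an edge ordering in which charging edges precede charged edges. -/
def IsAcyclicScheme {V : Type*} (G T : SimpleGraph V) (v : ℝ)
    (x : Detour G → ℝ) : Prop :=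
  IsChargingScheme G T v x ∧
  (∀ d : Detour G, x d ≠ 0 → d.edge ∉ T.edgeSet) ∧
  (∃ ord : Sym2 V → ℕ, ∀ d : Detour G, x d ≠ 0 →
    ∀ e ∈ d.path.edges, ord d.edge < ord e)

/-- LP-duality weight bound.  If `G' ⊇ T` admits a charging scheme of
value `v`, and every detour `(e,P)` of `G'` carrying positive charge satisfies
`(1+ε)·w(e) < w(P)`, then `w(G') ≤ (1 + v/ε)·w(T)`. -/
theorem stmt4 {V : Type*} [Fintype V]
    (G G' T : SimpleGraph V) (w : Sym2 V → ℝ) (ε v : ℝ)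
    (hw : ∀ e, 0 ≤ w e) (hε : 0 < ε) (hv : 0 ≤ v)
    (hsub : G' ≤ G) (hT : T ≤ G') (hTree : T.IsTree)
    (x : Detour G' → ℝ) (hx : IsChargingScheme G' T v x)
    (hdet : ∀ d : Detour G', 0 < x d → (1 + ε) * w d.edge < wlen w d.path) :
    totalWeight G' w ≤ (1 + v / ε) * totalWeight T w := by
  classical
  obtain ⟨hx0, hxfin, hout1, houtin, hTv⟩ := hx
  set s : Finset (Detour G') := hxfin.toFinset with hs
  have hmem_s : ∀ d, d ∈ s ↔ x d ≠ 0 := fun d => hxfin.mem_toFinset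
  set E : Finset (Sym2 V) := (Set.toFinite G'.edgeSet).toFinset with hE
  set ET : Finset (Sym2 V) := (Set.toFinite T.edgeSet).toFinset with hET
  have hmemE : ∀ e, e ∈ E ↔ e ∈ G'.edgeSet := fun e => Set.Finite.mem_toFinset _
  have hmemET : ∀ e, e ∈ ET ↔ e ∈ T.edgeSet := fun e => Set.Finite.mem_toFinset _
  have hETE : ET ⊆ E := fun e he =>
    (hmemE e).2 (SimpleGraph.edgeSet_mono hT ((hmemET e).1 he))
  set cO : Sym2 V → ℝ := fun e => ∑ d ∈ s.filter (fun d => d.edge = e), x d with hcO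
  set cI : Sym2 V → ℝ := fun e => ∑ d ∈ s.filter (fun d => e ∈ d.path.edges), x d with hcI
  have hcout : ∀ e, chargeOut x e = cO e := by
    intro e
    apply finsum_mem_eq_sum_of_inter_support_eq
    ext d
    simp only [Set.mem_inter_iff, Set.mem_setOf_eq, Function.mem_support, Finset.coe_filter,
      hmem_s]
    tauto
  have hcin : ∀ e, chargeIn x e = cI e := by
    intro e
    apply finsum_mem_eq_sum_of_inter_support_eq
    ext d
    simp only [Set.mem_inter_iff, Set.mem_setOf_eq, Function.mem_support, Finset.coe_filter,
      hmem_s]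
    tauto
  have htw : ∀ H : SimpleGraph V, totalWeight H w = ∑ e ∈ (Set.toFinite H.edgeSet).toFinset, w e := by
    intro H
    have hc : (↑(Set.toFinite H.edgeSet).toFinset : Set (Sym2 V)) = H.edgeSet :=
      Set.Finite.coe_toFinset _
    rw [totalWeight, ← hc, finsum_mem_coe_finset]
    exact Finset.sum_congr (Finset.coe_injective (by simp)) (fun _ _ => rfl)
  have hwlen : ∀ d : Detour G', wlen w d.path = ∑ e ∈ E, if e ∈ d.path.edges then w e else 0 := by
    intro d
    have hnd : d.path.edges.Nodup := by
      have h := d.cyc.edges_nodup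
      rw [SimpleGraph.Walk.edges_cons] at h
      exact h.of_cons
    have h1 : E ∩ d.path.edges.toFinset = d.path.edges.toFinset :=
      Finset.inter_eq_right.2 (fun e he => (hmemE e).2
        (SimpleGraph.Walk.edges_subset_edgeSet _ (List.mem_toFinset.1 he)))
    calc wlen w d.path = ∑ e ∈ d.path.edges.toFinset, w e := (List.sum_toFinset w hnd).symm
      _ = ∑ e ∈ E ∩ d.path.edges.toFinset, w e := by rw [h1]
      _ = ∑ e ∈ E, if e ∈ d.path.edges then w e else 0 := by
          rw [← Finset.sum_ite_mem]
          exact Finset.sum_congr rfl fun e _ => by simp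
  have hB : ∑ d ∈ s, x d * wlen w d.path = ∑ e ∈ E, w e * cI e := by
    calc ∑ d ∈ s, x d * wlen w d.path
        = ∑ d ∈ s, ∑ e ∈ E, (if e ∈ d.path.edges then x d * w e else 0) := by
          refine Finset.sum_congr rfl fun d _ => ?_
          rw [hwlen d, Finset.mul_sum]
          exact Finset.sum_congr rfl fun e _ => by split <;> simp
      _ = ∑ e ∈ E, ∑ d ∈ s, (if e ∈ d.path.edges then x d * w e else 0) := Finset.sum_comm
      _ = ∑ e ∈ E, w e * cI e := by
          refine Finset.sum_congr rfl fun e _ => ?_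
          rw [← Finset.sum_filter, ← Finset.sum_mul, mul_comm]
  have hA : ∑ d ∈ s, x d * w d.edge = ∑ e ∈ E, w e * cO e := by
    calc ∑ d ∈ s, x d * w d.edge
        = ∑ d ∈ s, ∑ e ∈ E, (if d.edge = e then x d * w e else 0) := by
          refine Finset.sum_congr rfl fun d _ => ?_
          rw [Finset.sum_ite_eq, if_pos ((hmemE _).2 d.adj)]
      _ = ∑ e ∈ E, ∑ d ∈ s, (if d.edge = e then x d * w e else 0) := Finset.sum_comm
      _ = ∑ e ∈ E, w e * cO e := by
          refine Finset.sum_congr rfl fun e _ => ?_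
          rw [← Finset.sum_filter, ← Finset.sum_mul, mul_comm]
  have hAB : ∑ d ∈ s, x d * ((1 + ε) * w d.edge) ≤ ∑ d ∈ s, x d * wlen w d.path := by
    refine Finset.sum_le_sum fun d hd => ?_
    have hxd : 0 < x d := lt_of_le_of_ne (hx0 d) (Ne.symm ((hmem_s d).1 hd))
    exact mul_le_mul_of_nonneg_left (le_of_lt (hdet d hxd)) hxd.le
  have hLHS : ∑ d ∈ s, x d * ((1 + ε) * w d.edge) = (1 + ε) * ∑ d ∈ s, x d * w d.edge := by
    rw [Finset.mul_sum]
    exact Finset.sum_congr rfl fun d _ => by ring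
  have hkey : (1 + ε) * (∑ e ∈ E, w e * cO e) ≤ ∑ e ∈ E, w e * cI e := by
    rw [← hA, ← hB, ← hLHS]; exact hAB
  have hnet : ∑ e ∈ E, w e * (cI e - cO e) ≤ v * ∑ e ∈ ET, w e := by
    have h1 : ∑ e ∈ E, w e * (cI e - cO e) ≤ ∑ e ∈ E, (if e ∈ ET then v * w e else 0) := by
      refine Finset.sum_le_sum fun e he => ?_
      by_cases hT' : e ∈ ET
      · rw [if_pos hT']
        have hle := hTv e ((hmemET e).1 hT')
        rw [hcin e, hcout e] at hle
        calc w e * (cI e - cO e) ≤ w e * v := mul_le_mul_of_nonneg_left hle (hw e)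
          _ = v * w e := mul_comm _ _
      · rw [if_neg hT']
        have hle := houtin e ((hmemE e).1 he) (fun h => hT' ((hmemET e).2 h))
        rw [hcin e, hcout e] at hle
        have := mul_le_mul_of_nonneg_left hle (hw e)
        simpa using this
    have h2 : ∑ e ∈ E, (if e ∈ ET then v * w e else 0) = v * ∑ e ∈ ET, w e := by
      rw [Finset.sum_ite_mem, Finset.inter_eq_right.2 hETE, Finset.mul_sum]
    linarith
  have hsub2 : (∑ e ∈ E, w e * cI e) - ∑ e ∈ E, w e * cO e = ∑ e ∈ E, w e * (cI e - cO e) := by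
    rw [← Finset.sum_sub_distrib]
    exact Finset.sum_congr rfl fun e _ => by ring
  have hεS : ε * (∑ e ∈ E, w e * cO e) ≤ v * ∑ e ∈ ET, w e := by nlinarith
  have hO_nonneg : ∀ e, 0 ≤ cO e := fun e => Finset.sum_nonneg fun d _ => hx0 d
  have hnontree : ∑ e ∈ E \ ET, w e ≤ ∑ e ∈ E, w e * cO e := by
    calc ∑ e ∈ E \ ET, w e ≤ ∑ e ∈ E \ ET, w e * cO e := by
          refine Finset.sum_le_sum fun e he => ?_
          have heE := (Finset.mem_sdiff.1 he).1
          have h1 : 1 ≤ cO e := by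
            have := hout1 e ((hmemE e).1 heE)
              (fun h => (Finset.mem_sdiff.1 he).2 ((hmemET e).2 h))
            rwa [hcout e] at this
          nlinarith [hw e]
      _ ≤ ∑ e ∈ E, w e * cO e :=
          Finset.sum_le_sum_of_subset_of_nonneg Finset.sdiff_subset
            (fun e _ _ => mul_nonneg (hw e) (hO_nonneg e))
  have hfin : ∑ e ∈ E \ ET, w e ≤ (v / ε) * ∑ e ∈ ET, w e := by
    rw [div_mul_eq_mul_div, le_div_iff₀ hε]
    nlinarith
  have hsplit : totalWeight G' w = ∑ e ∈ E \ ET, w e + ∑ e ∈ ET, w e := by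
    rw [htw G', ← Finset.sum_sdiff hETE]
  have hTW : totalWeight T w = ∑ e ∈ ET, w e := htw T
  rw [hsplit, hTW]
  nlinarith [hfin]
end
end

section
/- If there exists an acyclic charging scheme of value v from G to a spanning tree T, and e is an edge of G not in T, then there exists an acyclic charging scheme of value v from G − e to T. -/
open scoped Classical
noncomputable section

/-!
Every detour `d` whose edge is not `e` is replaced, for each detour `de` of `e`, by the shortcut
of `d` through `de`, with weight `x d * x de / out(e)`; if `e` is not on the path of `d`, this
shortcut is `d` itself, seen in `G - e`. Acyclicity guarantees that all these shortcuts exist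
(`d.edge < e < f` for every edge `f` on the path of `de`), so summing over `de` gives back
`out(f)` for every `f ≠ e`. The in-charge an edge receives through paths of detours of `e` is
multiplied by `in(e) / out(e) ≤ 1`, so in-charges do not increase, and the shortcut of `d`
inherits the position of `d.edge` in the order.
-/

open SimpleGraph

theorem SimpleGraph.Walk.exists_reroute {V : Type*} {G H : SimpleGraph V} (S : Set (Sym2 V))
    {a b : V} (p : G.Walk a b)
    (h : ∀ u w, s(u, w) ∈ p.edges → ¬H.Adj u w → ∃ r : H.Walk u w, ∀ f ∈ r.edges, f ∈ S) :
    ∃ q : H.Walk a b, ∀ f ∈ q.edges, f ∈ p.edges ∨ f ∈ S := by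
  induction p with
  | nil => exact ⟨.nil, by simp⟩
  | @cons u w b hadj p ih =>
    obtain ⟨q, hq⟩ := ih fun u' w' hmem hH => h u' w' (List.mem_cons_of_mem _ hmem) hH
    have hq' : ∀ f ∈ q.edges, f ∈ (Walk.cons hadj p).edges ∨ f ∈ S := fun f hf =>
      (hq f hf).imp_left (List.mem_cons_of_mem _)
    by_cases hH : H.Adj u w
    · refine ⟨.cons hH q, fun f hf => ?_⟩
      rcases List.mem_cons.mp hf with rfl | hf
      exacts [Or.inl List.mem_cons_self, hq' f hf]
    · obtain ⟨r, hr⟩ := h u w List.mem_cons_self hH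
      refine ⟨r.append q, fun f hf => ?_⟩
      rcases List.mem_append.mp (Walk.edges_append r q ▸ hf) with hf | hf
      exacts [Or.inr (hr f hf), hq' f hf]

section FinsumFiber

variable {α β M : Type*} [AddCommMonoid M]

theorem finsum_mem_eq_sum_filter_of_support_subset (f : α → M) {t : Finset α}
    (h : f.support ⊆ t) (s : Set α) [DecidablePred (· ∈ s)] :
    ∑ᶠ i ∈ s, f i = ∑ i ∈ t with i ∈ s, f i :=
  finsum_mem_eq_sum_of_inter_support_eq f <| by
    ext i
    simp only [Set.mem_inter_iff, Finset.coe_filter, Set.mem_ofPred_eq, Function.mem_support]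
    exact ⟨fun ⟨hs, hf⟩ => ⟨⟨h hf, hs⟩, hf⟩, fun ⟨⟨_, hs⟩, hf⟩ => ⟨hs, hf⟩⟩

theorem finsum_mem_finsum_mem_eq_some (φ : α → Option β) {w : α → M}
    (hw : w.support.Finite) (S : Set β) :
    ∑ᶠ b ∈ S, ∑ᶠ a ∈ {a | φ a = some b}, w a = ∑ᶠ a ∈ {a | ∃ b ∈ S, φ a = some b}, w a := by
  set A := hw.toFinset
  have hA : w.support ⊆ A := by simp [A]
  set B := (A.image φ).eraseNone
  have hB : (fun b => ∑ᶠ a ∈ {a | φ a = some b}, w a).support ⊆ B := by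
    intro b hb
    obtain ⟨a, ha, hwa⟩ := exists_ne_zero_of_finsum_mem_ne_zero hb
    exact Finset.mem_eraseNone.mpr (Finset.mem_image.mpr ⟨a, hA hwa, ha⟩)
  simp_rw [finsum_mem_eq_sum_filter_of_support_subset _ hB,
    finsum_mem_eq_sum_filter_of_support_subset _ hA]
  rw [← Finset.sum_biUnion]
  · congr 1
    ext a
    simp only [Finset.mem_filter, Finset.mem_biUnion, Set.mem_ofPred_eq, B, Finset.mem_eraseNone,
      Finset.mem_image]
    constructor
    · rintro ⟨b, ⟨-, hb⟩, ha, hab⟩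
      exact ⟨ha, b, hb, hab⟩
    · rintro ⟨ha, b, hb, hab⟩
      exact ⟨b, ⟨⟨a, ha, hab⟩, hb⟩, ha, hab⟩
  · intro b₁ _ b₂ _ hne
    exact Finset.disjoint_filter.mpr fun a _ h₁ h₂ => hne (Option.some_inj.mp (h₁.symm.trans h₂))

end FinsumFiber

theorem Finset.sum_filter_product_mul {α β R : Type*} [CommSemiring R] (s : Finset α)
    (t : Finset β) (p : α → Prop) (q : β → Prop) [DecidablePred p] [DecidablePred q]
    (f : α → R) (g : β → R) :
    ∑ z ∈ s ×ˢ t with p z.1 ∧ q z.2, f z.1 * g z.2 =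
      (∑ a ∈ s with p a, f a) * ∑ b ∈ t with q b, g b := by
  rw [Finset.filter_product, Finset.sum_product, Finset.sum_mul_sum]

theorem support_mul_prod_subset {α β R : Type*} [MulZeroClass R] (f : α → R) (g : β → R) :
    (fun z : α × β => f z.1 * g z.2).support ⊆ f.support ×ˢ g.support :=
  fun _ hz => ⟨left_ne_zero_of_mul hz, right_ne_zero_of_mul hz⟩

namespace Detour

variable {V : Type*} {G : SimpleGraph V} {e : Sym2 V}

theorem edge_not_mem_path (d : Detour G) : d.edge ∉ d.path.edges :=
  ((Walk.cons_isCycle_iff d.path d.adj).mp d.cyc).2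

theorem exists_walk_deleteEdges_of_edge_eq (de : Detour G) (hde : de.edge = e)
    {u w : V} (huw : s(u, w) = e) :
    ∃ r : (G.deleteEdges {e}).Walk u w, ∀ f ∈ r.edges, f ∈ de.path.edges := by
  have hsub : ∀ f ∈ de.path.edges, f ∈ (G.deleteEdges {e}).edgeSet := fun f hf => by
    rw [edgeSet_deleteEdges]
    refine ⟨de.path.edges_subset_edgeSet hf, fun hfe => de.edge_not_mem_path ?_⟩
    rwa [hde, ← Set.mem_singleton_iff.mp hfe]
  let Q := de.path.transfer _ hsub
  have hQ : Q.edges = de.path.edges := de.path.edges_transfer hsub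
  rcases Sym2.eq_iff.mp (huw.trans hde.symm) with ⟨rfl, rfl⟩ | ⟨rfl, rfl⟩
  · exact ⟨Q.reverse, by simp [hQ]⟩
  · exact ⟨Q, by simp [hQ]⟩

theorem exists_shortcut (d de : Detour G) (hde : de.edge = e) (hd : d.edge ≠ e)
    (hcyc : e ∈ d.path.edges → d.edge ∉ de.path.edges) :
    ∃ d' : Detour (G.deleteEdges {e}), d'.edge = d.edge ∧
      ∀ f ∈ d'.path.edges, f ∈ d.path.edges ∨ (e ∈ d.path.edges ∧ f ∈ de.path.edges) := by
  obtain ⟨q, hq⟩ := d.path.exists_reroute {f | e ∈ d.path.edges ∧ f ∈ de.path.edges}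
    fun u w hmem hH => by
      have huw : s(u, w) = e := by_contra fun hne =>
        hH (deleteEdges_adj.mpr ⟨d.path.adj_of_mem_edges hmem, Set.notMem_singleton_iff.mpr hne⟩)
      obtain ⟨r, hr⟩ := de.exists_walk_deleteEdges_of_edge_eq hde huw
      exact ⟨r, fun f hf => ⟨huw ▸ hmem, hr f hf⟩⟩
  have hq' : ∀ f ∈ q.bypass.edges, f ∈ d.path.edges ∨ (e ∈ d.path.edges ∧ f ∈ de.path.edges) :=
    fun f hf => hq f (q.edges_bypass_subset_edges hf)
  have hadj : (G.deleteEdges {e}).Adj d.u d.v := deleteEdges_adj.mpr ⟨d.adj, hd⟩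
  refine ⟨⟨d.u, d.v, hadj, q.bypass, (Walk.cons_isCycle_iff _ hadj).mpr
    ⟨q.bypass_isPath, fun hmem => ?_⟩⟩, rfl, hq'⟩
  rcases hq' _ hmem with h | ⟨he, h⟩
  exacts [d.edge_not_mem_path h, hcyc he h]

def shortcut (e : Sym2 V) (d de : Detour G) : Option (Detour (G.deleteEdges {e})) :=
  if h : de.edge = e ∧ d.edge ≠ e ∧ (e ∈ d.path.edges → d.edge ∉ de.path.edges) then
    some (exists_shortcut d de h.1 h.2.1 h.2.2).choose
  else none

theorem shortcut_eq_some {d de : Detour G} {d' : Detour (G.deleteEdges {e})}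
    (h : shortcut e d de = some d') :
    de.edge = e ∧ d.edge ≠ e ∧ d'.edge = d.edge ∧
      ∀ f ∈ d'.path.edges, f ∈ d.path.edges ∨ (e ∈ d.path.edges ∧ f ∈ de.path.edges) := by
  unfold shortcut at h
  split_ifs at h with hc
  cases Option.some_inj.mp h
  exact ⟨hc.1, hc.2.1, (exists_shortcut d de hc.1 hc.2.1 hc.2.2).choose_spec⟩

theorem exists_shortcut_eq_some {d de : Detour G} (hde : de.edge = e) (hd : d.edge ≠ e)
    (hcyc : e ∈ d.path.edges → d.edge ∉ de.path.edges) : ∃ d', shortcut e d de = some d' := by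
  rw [shortcut, dif_pos ⟨hde, hd, hcyc⟩]
  exact ⟨_, rfl⟩

end Detour

section DeleteEdge

variable {V : Type*} {G : SimpleGraph V} {x : Detour G → ℝ} {e : Sym2 V}

theorem chargeOut_eq_sum_filter {D : Finset (Detour G)} (hD : x.support ⊆ D) (f : Sym2 V) :
    chargeOut x f = ∑ d ∈ D with d.edge = f, x d :=
  finsum_mem_eq_sum_filter_of_support_subset x hD _

theorem chargeIn_eq_sum_filter {D : Finset (Detour G)} (hD : x.support ⊆ D) (f : Sym2 V) :
    chargeIn x f = ∑ d ∈ D with f ∈ d.path.edges, x d :=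
  finsum_mem_eq_sum_filter_of_support_subset x hD _

def deleteEdgeCharge (x : Detour G → ℝ) (e : Sym2 V) : Detour (G.deleteEdges {e}) → ℝ :=
  fun d' => (chargeOut x e)⁻¹ *
    ∑ᶠ q ∈ {q : Detour G × Detour G | Detour.shortcut e q.1 q.2 = some d'}, x q.1 * x q.2

theorem finsum_mem_deleteEdgeCharge (hx : x.support.Finite)
    (S : Set (Detour (G.deleteEdges {e}))) :
    ∑ᶠ d' ∈ S, deleteEdgeCharge x e d' = (chargeOut x e)⁻¹ *
      ∑ q ∈ hx.toFinset ×ˢ hx.toFinset with ∃ d' ∈ S, Detour.shortcut e q.1 q.2 = some d',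
        x q.1 * x q.2 := by
  have hsupp := support_mul_prod_subset x x
  simp only [deleteEdgeCharge]
  rw [← mul_finsum_mem,
    finsum_mem_finsum_mem_eq_some _ ((hx.prod hx).subset hsupp),
    finsum_mem_eq_sum_filter_of_support_subset _ (t := hx.toFinset ×ˢ hx.toFinset)
      (by simpa using hsupp)]
  rfl

theorem exists_shortcut_of_deleteEdgeCharge_ne_zero {d' : Detour (G.deleteEdges {e})}
    (h : deleteEdgeCharge x e d' ≠ 0) :
    ∃ d de, x d ≠ 0 ∧ x de ≠ 0 ∧ Detour.shortcut e d de = some d' := by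
  obtain ⟨q, hq, hxq⟩ := exists_ne_zero_of_finsum_mem_ne_zero (right_ne_zero_of_mul h)
  exact ⟨q.1, q.2, left_ne_zero_of_mul hxq, right_ne_zero_of_mul hxq, hq⟩

theorem support_deleteEdgeCharge_finite (hx : x.support.Finite) :
    (deleteEdgeCharge x e).support.Finite := by
  refine (((hx.prod hx).image fun q => Detour.shortcut e q.1 q.2).preimage
    (Option.some_injective _).injOn).subset fun d' hd' => ?_
  obtain ⟨d, de, hd, hde, hsc⟩ := exists_shortcut_of_deleteEdgeCharge_ne_zero hd'
  exact ⟨(d, de), ⟨hd, hde⟩, hsc⟩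

theorem deleteEdgeCharge_nonneg (hx : ∀ d, 0 ≤ x d) (d' : Detour (G.deleteEdges {e})) :
    0 ≤ deleteEdgeCharge x e d' :=
  mul_nonneg (inv_nonneg.mpr (finsum_nonneg fun _ => finsum_nonneg fun _ => hx _))
    (finsum_nonneg fun _ => finsum_nonneg fun _ => mul_nonneg (hx _) (hx _))

def CanShortcutThrough (x : Detour G → ℝ) (e : Sym2 V) : Prop :=
  ∀ d de, x d ≠ 0 → x de ≠ 0 → e ∈ d.path.edges → de.edge = e → d.edge ∉ de.path.edges

theorem chargeOut_deleteEdgeCharge (hx : x.support.Finite) (hc : chargeOut x e ≠ 0)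
    (hcs : CanShortcutThrough x e) {f : Sym2 V} (hf : f ≠ e) : chargeOut (deleteEdgeCharge x e) f = chargeOut x f := by
  have hD : x.support ⊆ hx.toFinset := by simp
  rw [chargeOut, finsum_mem_deleteEdgeCharge hx, inv_mul_eq_iff_eq_mul₀ hc, mul_comm,
    chargeOut_eq_sum_filter hD f, chargeOut_eq_sum_filter hD e, ← Finset.sum_filter_product_mul]
  refine Finset.sum_congr (Finset.filter_congr fun ⟨d, de⟩ hq => ?_) fun _ _ => rfl
  simp only [Finset.mem_product, Set.Finite.mem_toFinset, Function.mem_support] at hq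
  constructor
  · rintro ⟨d', hd'f, hsc⟩
    obtain ⟨hde, -, hedge, -⟩ := Detour.shortcut_eq_some hsc
    exact ⟨hedge ▸ hd'f, hde⟩
  · rintro ⟨hdf, hde⟩
    obtain ⟨d', hsc⟩ := Detour.exists_shortcut_eq_some hde (hdf ▸ hf)
      (fun he => hcs d de hq.1 hq.2 he hde)
    exact ⟨d', (Detour.shortcut_eq_some hsc).2.2.1.trans hdf, hsc⟩

theorem chargeIn_deleteEdgeCharge_le (hx : x.support.Finite) (hx0 : ∀ d, 0 ≤ x d)
    (hc : 0 < chargeOut x e) (he : chargeIn x e ≤ chargeOut x e) (f : Sym2 V) :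
    chargeIn (deleteEdgeCharge x e) f ≤ chargeIn x f := by
  set D := hx.toFinset
  have hD : x.support ⊆ D := by simp [D]
  set c := chargeOut x e
  set S₁ := ∑ d ∈ D with f ∈ d.path.edges ∧ ¬d.edge = e, x d
  set S₂ := ∑ d ∈ D with f ∈ d.path.edges ∧ d.edge = e, x d
  have hS₂ : 0 ≤ S₂ := Finset.sum_nonneg fun d _ => hx0 d
  have hsplit : chargeIn x f = S₁ + S₂ := by
    rw [chargeIn_eq_sum_filter hD, ← Finset.sum_filter_add_sum_filter_not _ (·.edge = e),
      Finset.filter_filter, Finset.filter_filter, add_comm]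
  have hbound : ∑ q ∈ D ×ˢ D with ∃ d' ∈ {d' | f ∈ d'.path.edges},
      Detour.shortcut e q.1 q.2 = some d', x q.1 * x q.2 ≤ S₁ * c + chargeIn x e * S₂ := by
    have hsub : ∀ q : Detour G × Detour G,
        (∃ d' ∈ {d' | f ∈ d'.path.edges}, Detour.shortcut e q.1 q.2 = some d') →
          ((f ∈ q.1.path.edges ∧ ¬q.1.edge = e) ∧ q.2.edge = e) ∨
            (e ∈ q.1.path.edges ∧ (f ∈ q.2.path.edges ∧ q.2.edge = e)) := by
      rintro q ⟨d', hfd', hsc⟩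
      obtain ⟨hde, hd, -, hpath⟩ := Detour.shortcut_eq_some hsc
      rcases hpath f hfd' with h | ⟨he, h⟩
      exacts [Or.inl ⟨⟨h, hd⟩, hde⟩, Or.inr ⟨he, h, hde⟩]
    have hnonneg : ∀ q : Detour G × Detour G, 0 ≤ x q.1 * x q.2 :=
      fun q => mul_nonneg (hx0 _) (hx0 _)
    rw [show c = _ from chargeOut_eq_sum_filter hD e, chargeIn_eq_sum_filter hD,
      ← Finset.sum_filter_product_mul, ← Finset.sum_filter_product_mul]
    calc _ ≤ ∑ q ∈ D ×ˢ D with ((f ∈ q.1.path.edges ∧ ¬q.1.edge = e) ∧ q.2.edge = e) ∨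
            (e ∈ q.1.path.edges ∧ (f ∈ q.2.path.edges ∧ q.2.edge = e)), x q.1 * x q.2 :=
          Finset.sum_le_sum_of_subset_of_nonneg (Finset.monotone_filter_right _ fun q _ => hsub q)
            fun q _ _ => hnonneg q
      _ ≤ _ := by
          rw [Finset.filter_or, ← Finset.sum_union_inter]
          exact le_add_of_nonneg_right (Finset.sum_nonneg fun q _ => hnonneg q)
  rw [chargeIn, finsum_mem_deleteEdgeCharge hx, hsplit, inv_mul_le_iff₀ hc]
  linarith [mul_le_mul_of_nonneg_right he hS₂]

end DeleteEdge

section Schemes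

variable {V : Type*} {G T : SimpleGraph V} {v : ℝ} {x : Detour G → ℝ} {e : Sym2 V}

theorem IsAcyclicScheme.canShortcutThrough (hx : IsAcyclicScheme G T v x) (e : Sym2 V) :
    CanShortcutThrough x e := by
  obtain ⟨-, -, ord, hord⟩ := hx
  intro d de hd hde he hdeg hmem
  have h₁ := hord d hd e he
  have h₂ := hord de hde d.edge hmem
  rw [hdeg] at h₂
  omega

theorem IsChargingScheme.deleteEdgeCharge (hx : IsChargingScheme G T v x)
    (heG : e ∈ G.edgeSet) (heT : e ∉ T.edgeSet) (hcs : CanShortcutThrough x e) :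
    IsChargingScheme (G.deleteEdges {e}) T v (deleteEdgeCharge x e) := by
  obtain ⟨hpos, hfin, hout, hnet, htree⟩ := hx
  have hc : 0 < chargeOut x e := one_pos.trans_le (hout e heG heT)
  have hine : chargeIn x e ≤ chargeOut x e := sub_nonpos.mp (hnet e heG heT)
  have hout' {f} (hf : f ≠ e) := chargeOut_deleteEdgeCharge hfin hc.ne' hcs hf
  have hin' := chargeIn_deleteEdgeCharge_le hfin hpos hc hine
  have hmem {f} (hf : f ∈ (G.deleteEdges {e}).edgeSet) : f ∈ G.edgeSet ∧ f ≠ e := by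
    simpa [edgeSet_deleteEdges] using hf
  refine ⟨deleteEdgeCharge_nonneg hpos, support_deleteEdgeCharge_finite hfin, ?_, ?_, ?_⟩
  · intro f hf hfT
    rw [hout' (hmem hf).2]
    exact hout f (hmem hf).1 hfT
  · intro f hf hfT
    rw [hout' (hmem hf).2]
    linarith [hin' f, hnet f (hmem hf).1 hfT]
  · intro f hfT
    rw [hout' (ne_of_mem_of_not_mem hfT heT)]
    linarith [hin' f, htree f hfT]

end Schemes

theorem stmt5_general {V : Type*}
    (G T : SimpleGraph V) (v : ℝ) (x : Detour G → ℝ)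
    (hx : IsAcyclicScheme G T v x)
    (e : Sym2 V) (heG : e ∈ G.edgeSet) (heT : e ∉ T.edgeSet) :
    ∃ x' : Detour (G.deleteEdges {e}) → ℝ,
      IsAcyclicScheme (G.deleteEdges {e}) T v x' := by
  have hscheme := hx.1.deleteEdgeCharge heG heT (hx.canShortcutThrough e)
  obtain ⟨-, hnonT, ord, hord⟩ := hx
  refine ⟨deleteEdgeCharge x e, hscheme, fun d' hd' => ?_, ord, fun d' hd' f hf => ?_⟩
  · obtain ⟨d, _, hd, -, hsc⟩ := exists_shortcut_of_deleteEdgeCharge_ne_zero hd'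
    rw [(Detour.shortcut_eq_some hsc).2.2.1]
    exact hnonT d hd
  · obtain ⟨d, de, hd, hde, hsc⟩ := exists_shortcut_of_deleteEdgeCharge_ne_zero hd'
    obtain ⟨hdeg, -, hedge, hpath⟩ := Detour.shortcut_eq_some hsc
    rw [hedge]
    rcases hpath f hf with h | ⟨he, h⟩
    · exact hord d hd f h
    · exact (hord d hd e he).trans (hdeg ▸ hord de hde f h)

/-- if there is an acyclic charging scheme of value `v` from `G` to a
spanning tree `T`, and `e` is an edge of `G` not in `T`, then there is an acyclic
charging scheme of value `v` from `G − e` to `T`. -/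
theorem stmt5 {V : Type*} [Fintype V]
    (G T : SimpleGraph V) (v : ℝ) (x : Detour G → ℝ)
    (hT : IsSpanningTree G T)
    (hx : IsAcyclicScheme G T v x)
    (e : Sym2 V) (heG : e ∈ G.edgeSet) (heT : e ∉ T.edgeSet) :
    ∃ x' : Detour (G.deleteEdges {e}) → ℝ,
      IsAcyclicScheme (G.deleteEdges {e}) T v x' :=
  stmt5_general G T v x hx e heG heT
end
end

section
/- Given detours (e₁,P₁) and (e₂,P₂) in a graph G with e₂ ∈ P₁ and e₁ ∉ P₂, the walk obtained from P₁ by replacing edge e₂ with path P₂ contains a simple path P' between the endpoints of e₁ avoiding e₁, so that (e₁, P') is again a detour. -/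
open scoped Classical
noncomputable section

open SimpleGraph in
lemma split_at_edge {V : Type*} {G : SimpleGraph V} {x y : V} (p : G.Walk x y)
    {e : Sym2 V} (he : e ∈ p.edges) :
    ∃ (a b : V) (hab : G.Adj a b) (q₁ : G.Walk x a) (q₂ : G.Walk b y),
      p = q₁.append (SimpleGraph.Walk.cons hab q₂) ∧ s(a, b) = e := by
  induction p with
  | nil => simp at he
  | cons h' p' ih =>
    rename_i u v w
    rw [SimpleGraph.Walk.edges_cons, List.mem_cons] at he
    rcases he with he | he
    · exact ⟨u, v, h', SimpleGraph.Walk.nil, p', rfl, he.symm⟩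
    · obtain ⟨a, b, hab, q₁, q₂, hp, hs⟩ := ih he
      exact ⟨a, b, hab, SimpleGraph.Walk.cons h' q₁, q₂, by rw [hp]; rfl, hs⟩

/-- well-definedness of the shortcut operation.  Given detours
`(e₁,P₁)` and `(e₂,P₂)` with `e₂ ∈ P₁` and `e₁ ∉ P₂`, there is a simple path `P'`
between the endpoints of `e₁`, avoiding `e₂`, with all edges from `P₁` or `P₂`,
such that `(e₁, P')` is again a detour. -/
theorem stmt6 {V : Type*} [Fintype V] {G : SimpleGraph V}
    (d₁ d₂ : Detour G)
    (h21 : d₂.edge ∈ d₁.path.edges)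
    (h12 : d₁.edge ∉ d₂.path.edges) :
    ∃ p' : G.Walk d₁.v d₁.u,
      (SimpleGraph.Walk.cons d₁.adj p').IsCycle ∧
      (∀ f ∈ p'.edges, f ∈ d₁.path.edges ∨ f ∈ d₂.path.edges) ∧
      d₂.edge ∉ p'.edges := by
  classical
  have hcyc₁ := d₁.cyc
  have hcyc₂ := d₂.cyc
  -- e₁ ∉ P₁, e₂ ∉ P₂
  have he₁P₁ : d₁.edge ∉ d₁.path.edges := by
    have := hcyc₁.edges_nodup
    rw [SimpleGraph.Walk.edges_cons, List.nodup_cons] at this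
    exact this.1
  have he₂P₂ : d₂.edge ∉ d₂.path.edges := by
    have := hcyc₂.edges_nodup
    rw [SimpleGraph.Walk.edges_cons, List.nodup_cons] at this
    exact this.1
  obtain ⟨a, b, hab, q₁, q₂, hp, hs⟩ := split_at_edge d₁.path h21
  have hnodup : d₁.path.edges.Nodup := hcyc₁.edges_nodup.of_cons
  rw [hp, SimpleGraph.Walk.edges_append, SimpleGraph.Walk.edges_cons] at hnodup
  have he₂q₁ : d₂.edge ∉ q₁.edges := fun hmem => by
    have := List.disjoint_of_nodup_append hnodup hmem
    simp [hs] at this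
  have he₂q₂ : d₂.edge ∉ q₂.edges := by
    have := (List.nodup_append.mp hnodup).2.1
    rw [List.nodup_cons, hs] at this
    exact this.1
  have hR : ∃ R : G.Walk a b, (∀ f ∈ R.edges, f ∈ d₂.path.edges) ∧ d₂.edge ∉ R.edges := by
    obtain ⟨ha, hb⟩ | ⟨ha, hb⟩ : (a = d₂.u ∧ b = d₂.v) ∨ (a = d₂.v ∧ b = d₂.u) := by
      rw [Detour.edge, Sym2.eq_iff] at hs; tauto
    · subst ha hb
      exact ⟨d₂.path.reverse, by simp, by simpa using he₂P₂⟩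
    · subst ha hb
      exact ⟨d₂.path, fun f hf => hf, he₂P₂⟩
  obtain ⟨R, hRsub, hRe₂⟩ := hR
  set W : G.Walk d₁.v d₁.u := q₁.append (R.append q₂) with hW
  have hWsub : ∀ f ∈ W.edges, f ∈ d₁.path.edges ∨ f ∈ d₂.path.edges := by
    intro f hf
    rw [hW, SimpleGraph.Walk.edges_append, SimpleGraph.Walk.edges_append,
      List.mem_append, List.mem_append] at hf
    rcases hf with hf | hf | hf
    · left; rw [hp, SimpleGraph.Walk.edges_append, List.mem_append]; left; exact hf
    · right; exact hRsub f hf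
    · left; rw [hp, SimpleGraph.Walk.edges_append, SimpleGraph.Walk.edges_cons,
        List.mem_append, List.mem_cons]; right; right; exact hf
  have he₂W : d₂.edge ∉ W.edges := by
    rw [hW, SimpleGraph.Walk.edges_append, SimpleGraph.Walk.edges_append]
    simp only [List.mem_append]
    push_neg
    exact ⟨he₂q₁, hRe₂, he₂q₂⟩
  have he₁W : d₁.edge ∉ W.edges := fun hmem => by
    rcases hWsub _ hmem with h | h
    · exact he₁P₁ h
    · exact h12 h
  refine ⟨W.toPath, ?_, ?_, ?_⟩
  · rw [SimpleGraph.Walk.cons_isCycle_iff]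
    refine ⟨W.bypass_isPath, fun hmem => he₁W ?_⟩
    exact SimpleGraph.Walk.edges_bypass_subset W hmem
  · exact fun f hf => hWsub f (SimpleGraph.Walk.edges_toPath_subset W hf)
  · exact fun hmem => he₂W (SimpleGraph.Walk.edges_toPath_subset W hmem)
end
end

section
/- Let P be a shortest monotone path from the leftmost to the rightmost interval in a completed interval graph G of pathwidth k, and let T* be a spanning tree of G. For each component T_i* of T* − V(P), let P_{1,i} be a subpath of P between designated attachment points as in the construction. Then each edge e of P lies in at most k−1 of the subpaths P_{1,i}. -/
open scoped Classical
noncomputable section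

/-- let `I` be a family of intervals with at most `k+1` intervals
overlapping any point (pathwidth `k`).  Let `e = {u,v}` be an edge of the path `P`
with `x` a common point of `I u` and `I v`, and let `S i` be the vertex sets of the
pairwise-disjoint components `T_i*`, all disjoint from `{u, v}`.  Then the number of
components witnessing `e` (having a vertex whose interval contains `x`), i.e. the
number of subpaths `P_{1,i}` containing `e`, is at most `k − 1`. -/
theorem stmt13 {V : Type*} [Fintype V] {ι : Type*}
    (I : V → Set ℝ) (k : ℕ) (hk : 1 ≤ k)
    (hwidth : ∀ x : ℝ, {v : V | x ∈ I v}.ncard ≤ k + 1)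
    (u v : V) (huv : u ≠ v) (x : ℝ) (hx : x ∈ I u ∩ I v)
    (S : ι → Set V)
    (hdisj : Pairwise fun i j => Disjoint (S i) (S j))
    (hP : ∀ i, u ∉ S i ∧ v ∉ S i) :
    {i : ι | ∃ t ∈ S i, x ∈ I t}.ncard ≤ k - 1 := by
  classical
  set T : Set V := {w : V | x ∈ I w} with hT
  set A : Set V := T \ {u, v} with hA
  set f : ι → V := fun i => if h : ∃ t ∈ S i, x ∈ I t then h.choose else u with hf
  have hfmem : ∀ i ∈ {i : ι | ∃ t ∈ S i, x ∈ I t}, f i ∈ S i ∧ x ∈ I (f i) := by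
    intro i hi
    simp only [Set.mem_setOf_eq] at hi
    simp only [hf, dif_pos hi]
    exact ⟨hi.choose_spec.1, hi.choose_spec.2⟩
  have hmaps : ∀ i ∈ {i : ι | ∃ t ∈ S i, x ∈ I t}, f i ∈ A := by
    intro i hi
    obtain ⟨h1, h2⟩ := hfmem i hi
    refine ⟨h2, ?_⟩
    simp only [Set.mem_insert_iff, Set.mem_singleton_iff]
    rintro (h | h)
    · rw [h] at h1; exact (hP i).1 h1
    · rw [h] at h1; exact (hP i).2 h1
  have hinj : Set.InjOn f {i : ι | ∃ t ∈ S i, x ∈ I t} := by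
    intro i hi j hj hij
    by_contra hne
    exact (hdisj hne).ne_of_mem (hfmem i hi).1 (hij ▸ (hfmem j hj).1) rfl
  have hAfin : A.Finite := Set.toFinite _
  have h1 : {i : ι | ∃ t ∈ S i, x ∈ I t}.ncard ≤ A.ncard :=
    Set.ncard_le_ncard_of_injOn f hmaps hinj hAfin
  have hsub : ({u, v} : Set V) ⊆ T := by
    rintro w (rfl | rfl)
    · exact hx.1
    · exact hx.2
  have hcard2 : ({u, v} : Set V).ncard = 2 := Set.ncard_pair huv
  have hdiff : A.ncard = T.ncard - 2 := by
    rw [hA, Set.ncard_diff hsub, hcard2]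
  have hTk : T.ncard ≤ k + 1 := hwidth x
  omega
end
end

section
/- In a completed interval graph G with a monotone spanning tree T, define the graph T⁽²⁾ whose vertices are the edges of G, where each non-tree edge {j,k} with left(j) < left(k) is joined to its parent {i,j}, i being the T-parent of k. Then T⁽²⁾ is a forest in which every component contains exactly one vertex corresponding to an edge of T, namely its root. -/
open scoped Classical
noncomputable section

/-- Minimum spanning tree weight. -/
def mstWeight {V : Type*} (G : SimpleGraph V) (w : Sym2 V → ℝ) : ℝ :=
  sInf {x : ℝ | ∃ T : SimpleGraph V, IsSpanningTree G T ∧ totalWeight T w = x}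

/-- `G` is the completed interval graph of the family of intervals `I`:
two distinct vertices are adjacent iff their intervals intersect. -/
def IsIntervalGraph {V : Type*} (G : SimpleGraph V) (I : V → Set ℝ) : Prop :=
  (∀ v, ∃ a b : ℝ, a ≤ b ∧ I v = Set.Icc a b) ∧
  (∀ u v : V, G.Adj u v ↔ u ≠ v ∧ (I u ∩ I v).Nonempty)

/-- `left` gives the (distinct) left endpoints of the intervals. -/
def IsLeftEnd {V : Type*} (I : V → Set ℝ) (left : V → ℝ) : Prop :=
  (∀ v, IsLeast (I v) (left v)) ∧ Function.Injective left

/-- The spanning tree determined by a parent function `par` with root `r`: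
its edges are the pairs `{par v, v}` for `v ≠ r`. -/
def parTree {V : Type*} (par : V → V) (r : V) : SimpleGraph V :=
  SimpleGraph.fromEdgeSet {e : Sym2 V | ∃ v : V, v ≠ r ∧ e = s(par v, v)}

/-- The parent function `par` with root `r` describes a monotone spanning tree of
`G`: each non-root vertex is adjacent to its parent, which has strictly smaller
left endpoint. -/
def IsMonotoneTree {V : Type*} (G : SimpleGraph V) (left : V → ℝ)
    (par : V → V) (r : V) : Prop :=
  (∀ v, left r ≤ left v) ∧
  (∀ v : V, v ≠ r → G.Adj (par v) v ∧ left (par v) < left v) ∧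
  (parTree par r).IsTree

/-- Left endpoint of the intersection of the two intervals of an edge: for closed
intervals this is the maximum of the two left endpoints. -/
def interLeft {V : Type*} (left : V → ℝ) : Sym2 V → ℝ :=
  Sym2.lift ⟨fun a b => max (left a) (left b), fun _ _ => max_comm _ _⟩

/-- for a completed interval graph `G` with monotone spanning tree
`T`, the graph `T⁽²⁾` on the edges of `G`, joining each non-tree edge `{j,k}`
(with `left j < left k`) to its parent `{i,j}` where `i` is the `T`-parent of `k`,
is a forest: parent links strictly decrease the left endpoint of the intersection
interval, and iterating the parent map from any edge reaches a tree edge (the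
unique tree edge of its component, its root). -/
theorem stmt14 {V : Type*} [Fintype V] [Nonempty V]
    (G : SimpleGraph V) (I : V → Set ℝ) (left : V → ℝ) (par : V → V) (r : V)
    (hIG : IsIntervalGraph G I) (hleft : IsLeftEnd I left) (hconn : G.Connected)
    (hmono : IsMonotoneTree G left par r) (hsub : parTree par r ≤ G) :
    ∃ par2 : Sym2 V → Sym2 V,
      (∀ j k : V, G.Adj j k → ¬ (parTree par r).Adj j k → left j < left k →
        par2 s(j, k) = s(par k, j) ∧ G.Adj (par k) j) ∧
      (∀ e ∈ G.edgeSet, e ∉ (parTree par r).edgeSet →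
        par2 e ∈ G.edgeSet ∧
        interLeft left (par2 e) < interLeft left e ∧
        ∃ n : ℕ, par2^[n] e ∈ (parTree par r).edgeSet) := by
  obtain ⟨hInt, hAdj⟩ := hIG
  obtain ⟨hLeast, hInj⟩ := hleft
  obtain ⟨hrmin, hpar, htree⟩ := hmono
  -- left k ∈ I u whenever u is adjacent to k and left u < left k
  have mem : ∀ u k : V, G.Adj u k → left u < left k → left k ∈ I u := by
    intro u k huk hu
    obtain ⟨x, hxu, hxk⟩ := ((hAdj u k).1 huk).2
    obtain ⟨a, b, hab, hIu⟩ := hInt u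
    have hua : left u = a := by
      have h1 := hLeast u
      rw [hIu] at h1
      exact h1.unique (isLeast_Icc hab)
    have hxb : x ≤ b := by
      rw [hIu] at hxu; exact hxu.2
    have hkx : left k ≤ x := (hLeast k).2 hxk
    rw [hIu]
    exact ⟨hua ▸ hu.le, le_trans hkx hxb⟩
  have key : ∀ j k : V, G.Adj j k → ¬ (parTree par r).Adj j k → left j < left k →
      G.Adj (par k) j ∧ left (par k) < left k := by
    intro j k hjk hnt hlt
    have hkr : k ≠ r := by
      intro h; subst h; exact absurd hlt (not_lt.2 (hrmin j))
    obtain ⟨hadjpk, hltpk⟩ := hpar k hkr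
    have hpkj : par k ≠ j := by
      rintro rfl
      exact hnt (by
        rw [parTree, SimpleGraph.fromEdgeSet_adj]
        exact ⟨⟨k, hkr, rfl⟩, hjk.ne⟩)
    have h1 : left k ∈ I (par k) := mem (par k) k hadjpk hltpk
    have h2 : left k ∈ I j := mem j k hjk hlt
    exact ⟨(hAdj (par k) j).2 ⟨hpkj, ⟨left k, h1, h2⟩⟩, hltpk⟩
  set P : Sym2 V → Sym2 V → Prop := fun e f =>
    ∃ j k : V, e = s(j, k) ∧ G.Adj j k ∧ ¬ (parTree par r).Adj j k ∧
      left j < left k ∧ f = s(par k, j) with hP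
  have Puniq : ∀ e f f', P e f → P e f' → f = f' := by
    rintro e f f' ⟨j, k, rfl, _, _, hlt, rfl⟩ ⟨j', k', he, _, _, hlt', rfl⟩
    rcases Sym2.eq_iff.1 he with ⟨rfl, rfl⟩ | ⟨rfl, rfl⟩
    · rfl
    · exact absurd hlt' (not_lt.2 hlt.le)
  set par2 : Sym2 V → Sym2 V := fun e => if h : ∃ f, P e f then h.choose else e
    with hpar2
  have hval : ∀ j k : V, G.Adj j k → ¬ (parTree par r).Adj j k → left j < left k →
      par2 s(j, k) = s(par k, j) := by
    intro j k h1 h2 h3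
    have hex : ∃ f, P s(j, k) f := ⟨s(par k, j), j, k, rfl, h1, h2, h3, rfl⟩
    simp only [hpar2, dif_pos hex]
    exact Puniq _ _ _ hex.choose_spec ⟨j, k, rfl, h1, h2, h3, rfl⟩
  -- step lemma
  have step : ∀ e ∈ G.edgeSet, e ∉ (parTree par r).edgeSet →
      par2 e ∈ G.edgeSet ∧ interLeft left (par2 e) < interLeft left e := by
    intro e he hnt
    induction e with
    | _ a b =>
      rw [SimpleGraph.mem_edgeSet] at he
      rw [SimpleGraph.mem_edgeSet] at hnt
      wlog hab : left a < left b generalizing a b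
      · have hne : left b ≠ left a := fun h => he.ne (hInj h).symm
        have := this b a he.symm (fun h => hnt h.symm)
          (lt_of_le_of_ne (not_lt.1 hab) hne)
        rwa [Sym2.eq_swap] at this
      have hkey := key a b he hnt hab
      rw [hval a b he hnt hab]
      constructor
      · exact (G.mem_edgeSet).2 hkey.1
      · simp only [interLeft, Sym2.lift_mk]
        rw [max_lt_iff]
        exact ⟨lt_of_lt_of_le hkey.2 (le_max_right _ _),
          lt_of_lt_of_le hab (le_max_right _ _)⟩
  refine ⟨par2, fun j k h1 h2 h3 => ⟨hval j k h1 h2 h3, (key j k h1 h2 h3).1⟩, ?_⟩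
  intro e he hnt
  obtain ⟨h1, h2⟩ := step e he hnt
  refine ⟨h1, h2, ?_⟩
  -- termination by strong induction on a finite measure
  clear hnt h1 h2
  have main : ∀ m : ℕ, ∀ e ∈ G.edgeSet,
      (Finset.univ.filter (fun f : Sym2 V => interLeft left f < interLeft left e)).card ≤ m →
      ∃ n : ℕ, par2^[n] e ∈ (parTree par r).edgeSet := by
    intro m
    induction m with
    | zero =>
      intro e he hm
      by_cases ht : e ∈ (parTree par r).edgeSet
      · exact ⟨0, ht⟩
      · obtain ⟨h1, h2⟩ := step e he ht
        exfalso
        have : par2 e ∈ Finset.univ.filter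
            (fun f : Sym2 V => interLeft left f < interLeft left e) := by
          simp [h2]
        have := Finset.card_pos.2 ⟨par2 e, this⟩
        omega
    | succ m ih =>
      intro e he hm
      by_cases ht : e ∈ (parTree par r).edgeSet
      · exact ⟨0, ht⟩
      · obtain ⟨h1, h2⟩ := step e he ht
        have hss : (Finset.univ.filter
              (fun f : Sym2 V => interLeft left f < interLeft left (par2 e))) ⊂
            (Finset.univ.filter
              (fun f : Sym2 V => interLeft left f < interLeft left e)) := by
          refine Finset.ssubset_iff_of_subset ?_ |>.2 ⟨par2 e, by simp [h2], by simp⟩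
          intro f hf
          simp only [Finset.mem_filter, Finset.mem_univ, true_and] at hf ⊢
          exact hf.trans h2
        have hcard := Finset.card_lt_card hss
        obtain ⟨n, hn⟩ := ih (par2 e) h1 (by omega)
        exact ⟨n + 1, by rwa [Function.iterate_succ_apply]⟩
  exact main _ e he le_rfl
end
end
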